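/- For each fixed discount rate α > 0, a pair (p,q) ∈ [0,1]² is an α-Nash equilibrium of the continuous-time Example-3 game if and only if p = (4+α)/(12+7α) and q = 2/3; in particular the α-Nash equilibrium is unique for each α. -/

import Mathlib

open Matrix Set

noncomputable section

/-- Transition rate matrix of the continuous-time Example-3 game
(controlled by player 2 alone). -/
def ex3Q (q : ℝ) : Matrix (Fin 2) (Fin 2) ℝ := !![-(1-q), 1-q; 1, -1]

/-- Expected reward-rate vector of player 1 in the Example-3 game. -/
def ex3r1 (p q : ℝ) : Fin 2 → ℝ :=
  ![4*p*q + 6*p*(1-q) + 5*(1-p)*q + 4*(1-p)*(1-q), 6]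

/-- Expected reward-rate vector of player 2 in the Example-3 game. -/
def ex3r2 (p q : ℝ) : Fin 2 → ℝ :=
  ![9*p*q + 3*p*(1-q) + 4*(1-p)*q + 5*(1-p)*(1-q), 7]

/-- α-discounted value vector of player 1. -/
def ex3v1 (α p q : ℝ) : Fin 2 → ℝ :=
  (α • (1 : Matrix (Fin 2) (Fin 2) ℝ) - ex3Q q)⁻¹.mulVec (ex3r1 p q)

/-- α-discounted value vector of player 2. -/
def ex3v2 (α p q : ℝ) : Fin 2 → ℝ :=
  (α • (1 : Matrix (Fin 2) (Fin 2) ℝ) - ex3Q q)⁻¹.mulVec (ex3r2 p q)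

/-- `(p,q)` is an α-Nash equilibrium of the Example-3 game. -/
def ex3IsNash (α p q : ℝ) : Prop :=
  p ∈ Icc (0:ℝ) 1 ∧ q ∈ Icc (0:ℝ) 1 ∧
  (∀ p' ∈ Icc (0:ℝ) 1, ∀ s, ex3v1 α p' q s ≤ ex3v1 α p q s) ∧
  (∀ q' ∈ Icc (0:ℝ) 1, ∀ s, ex3v2 α p q' s ≤ ex3v2 α p q s)

lemma ex3_det (α q : ℝ) :
    (α • (1 : Matrix (Fin 2) (Fin 2) ℝ) - ex3Q q).det = α*(α+2-q) := by
  simp [ex3Q, Matrix.det_fin_two, Matrix.smul_apply, Matrix.one_apply]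
  ring

lemma ex3_solve (α q : ℝ) (hα : 0 < α) (hq : q ≤ 1) (r v : Fin 2 → ℝ)
    (h : (α • (1 : Matrix (Fin 2) (Fin 2) ℝ) - ex3Q q).mulVec v = r) :
    (α • (1 : Matrix (Fin 2) (Fin 2) ℝ) - ex3Q q)⁻¹.mulVec r = v := by
  have hd : (α • (1 : Matrix (Fin 2) (Fin 2) ℝ) - ex3Q q).det ≠ 0 := by
    rw [ex3_det]; nlinarith
  rw [← h, Matrix.mulVec_mulVec, Matrix.nonsing_inv_mul _ (isUnit_iff_ne_zero.2 hd),
    Matrix.one_mulVec]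

lemma ex3v1_eq (α p q : ℝ) (hα : 0 < α) (hq : q ≤ 1) :
    ex3v1 α p q = ![((α+1)*(p*(2-3*q)+q+4) + 6*(1-q))/(α*(α+2-q)),
                    ((p*(2-3*q)+q+4) + 6*(α+1-q))/(α*(α+2-q))] := by
  have hD : α*(α+2-q) ≠ 0 := by nlinarith
  have hD2 : α + 2 - q ≠ 0 := ne_of_gt (by linarith)
  have hα0 : α ≠ 0 := hα.ne'
  apply ex3_solve α q hα hq
  funext s
  fin_cases s <;>
  · simp [Matrix.mulVec, dotProduct, Fin.sum_univ_two, ex3Q, ex3r1,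
      Matrix.smul_apply, Matrix.one_apply]
    field_simp
    ring

lemma ex3v2_eq (α p q : ℝ) (hα : 0 < α) (hq : q ≤ 1) :
    ex3v2 α p q = ![((α+1)*(p*(7*q-2)+5-q) + 7*(1-q))/(α*(α+2-q)),
                    ((p*(7*q-2)+5-q) + 7*(α+1-q))/(α*(α+2-q))] := by
  have hD : α*(α+2-q) ≠ 0 := by nlinarith
  have hD2 : α + 2 - q ≠ 0 := ne_of_gt (by linarith)
  have hα0 : α ≠ 0 := hα.ne'
  apply ex3_solve α q hα hq
  funext s
  fin_cases s <;>
  · simp [Matrix.mulVec, dotProduct, Fin.sum_univ_two, ex3Q, ex3r2,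
      Matrix.smul_apply, Matrix.one_apply]
    field_simp
    ring

/-- For each fixed discount rate α > 0, the continuous-time Example-3 game has
the unique Nash equilibrium `p = (4+α)/(12+7α)`, `q = 2/3`. -/
theorem ex3_unique_nash :
    ∀ α : ℝ, 0 < α → ∀ p ∈ Icc (0:ℝ) 1, ∀ q ∈ Icc (0:ℝ) 1,
      (ex3IsNash α p q ↔ (p = (4+α)/(12+7*α) ∧ q = 2/3)) := by
  intro α hα p hp q hq
  have h7 : (0:ℝ) < 12+7*α := by linarith
  constructor
  · rintro ⟨-, -, h1, h2⟩
    have hq1 : q ≤ 1 := hq.2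
    have hD : 0 < α*(α+2-q) := by nlinarith
    -- player 1 condition
    have H1 : ∀ p' ∈ Icc (0:ℝ) 1, p'*(2-3*q) ≤ p*(2-3*q) := by
      intro p' hp'
      have h := h1 p' hp' 1
      rw [ex3v1_eq α p q hα hq1, ex3v1_eq α p' q hα hq1] at h
      simp only [Matrix.cons_val_one, Matrix.head_cons, Matrix.cons_val_zero] at h
      rw [div_le_div_iff₀ hD hD] at h
      nlinarith [h]
    -- player 2 condition
    have H2 : ∀ q' ∈ Icc (0:ℝ) 1, α*(q'-q)*(p*(7*α+12)-(α+4)) ≤ 0 := by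
      intro q' hq'
      have hD' : 0 < α*(α+2-q') := by nlinarith [hq'.2]
      have h := h2 q' hq' 1
      rw [ex3v2_eq α p q hα hq1, ex3v2_eq α p q' hα hq'.2] at h
      simp only [Matrix.cons_val_one, Matrix.head_cons, Matrix.cons_val_zero] at h
      rw [div_le_div_iff₀ hD' hD] at h
      nlinarith [h]
    have j0 := H1 0 ⟨le_refl 0, by norm_num⟩
    have j1 := H1 1 ⟨by norm_num, le_refl 1⟩
    have k0 := H2 0 ⟨le_refl 0, by norm_num⟩
    have k1 := H2 1 ⟨by norm_num, le_refl 1⟩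
    have hq23 : q = 2/3 := by
      rcases lt_trichotomy q (2/3) with h | h | h
      · exfalso
        have hb : (0:ℝ) < 2-3*q := by linarith
        have hp1 : p = 1 := le_antisymm hp.2 (by nlinarith [j1])
        subst hp1
        have e1 : 0 < α*(1-q) := by nlinarith
        have e2 : (0:ℝ) < 6*α+8 := by linarith
        nlinarith [k1, mul_pos e1 e2]
      · exact h
      · exfalso
        have hb : 2-3*q < 0 := by linarith
        have hp0 : p = 0 := le_antisymm (by nlinarith [j0]) hp.1
        subst hp0
        have e1 : 0 < α*q := by nlinarith [hq.1]
        have e2 : (0:ℝ) < α+4 := by linarith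
        nlinarith [k0, mul_pos e1 e2]
    subst hq23
    have hc1 : 0 ≤ α*(p*(7*α+12)-(α+4)) := by nlinarith [k0]
    have hc2 : α*(p*(7*α+12)-(α+4)) ≤ 0 := by nlinarith [k1]
    have hc : p*(7*α+12)-(α+4) = 0 := by
      rcases mul_eq_zero.1 (le_antisymm hc2 hc1) with h | h
      · exact absurd h hα.ne'
      · exact h
    refine ⟨?_, rfl⟩
    rw [eq_div_iff h7.ne']
    linear_combination hc
  · rintro ⟨hp', hq'⟩
    subst hp' hq'
    refine ⟨hp, hq, ?_, ?_⟩
    · intro p' hp' s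
      rw [ex3v1_eq _ _ _ hα (by norm_num), ex3v1_eq _ _ _ hα (by norm_num)]
      apply le_of_eq
      fin_cases s <;> norm_num
    · intro q' hq' s
      have hD' : 0 < α*(α+2-q') := by nlinarith [hq'.2]
      have hD : 0 < α*(α+2-2/3) := by nlinarith
      rw [ex3v2_eq _ _ _ hα hq'.2, ex3v2_eq _ _ _ hα (by norm_num)]
      apply le_of_eq
      fin_cases s <;>
      · simp only [Fin.mk_zero, Fin.mk_one, Matrix.cons_val_one, Matrix.head_cons,
          Matrix.cons_val_zero]
        rw [div_eq_div_iff hD'.ne' hD.ne']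
        field_simp
        ring


end
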